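/- Let X be a standard normal random variable with distribution function Φ and let S be a nonnegative random variable with distribution function F, independent of X, such that F has upper endpoint 1 and S is not almost surely 0. Then for every s ∈ (0,1), P(SX > u) ~ ∫_s^1 (1 − Φ(u/x)) dF(x) as u → ∞, where ~ denotes that the ratio of the two sides tends to 1. -/

import Mathlib

open MeasureTheory ProbabilityTheory Filter

noncomputable section

/-- The Gumbel distribution function `Λ(x) = exp(-exp(-x))`. -/
def gumbel (x : ℝ) : ℝ := Real.exp (-Real.exp (-x))

/-- Distribution function of a real random variable. -/
def df {Ω : Type*} [MeasurableSpace Ω] (μ : Measure Ω) (Y : Ω → ℝ) : ℝ → ℝ :=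
  fun x => (μ {ω | Y ω ≤ x}).toReal

/-- Survival function of a real random variable. -/
def surv {Ω : Type*} [MeasurableSpace Ω] (μ : Measure Ω) (Y : Ω → ℝ) (u : ℝ) : ℝ :=
  (μ {ω | u < Y ω}).toReal

/-- Generalised inverse `G⁻¹(p) = inf {x : G x ≥ p}`. -/
def genInv (G : ℝ → ℝ) (p : ℝ) : ℝ := sInf {x : ℝ | p ≤ G x}

/-- The standard normal distribution function `Φ`. -/
def stdNormalCDF (x : ℝ) : ℝ := ((gaussianReal 0 1) (Set.Iic x)).toReal

/-- The distribution of `S` has upper endpoint `1`. -/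
def HasUpperEndpointOne {Ω : Type*} [MeasurableSpace Ω] (μ : Measure Ω) (S : Ω → ℝ) : Prop :=
  (∀ᵐ ω ∂μ, S ω ≤ 1) ∧ ∀ s : ℝ, s < 1 → 0 < μ {ω | s < S ω}

/-- The survival function of `S` is regularly varying at `1` with index `γ`. -/
def RegVarAtOne {Ω : Type*} [MeasurableSpace Ω] (μ : Measure Ω) (S : Ω → ℝ) (γ : ℝ) : Prop :=
  ∀ t : ℝ, 0 < t →
    Tendsto (fun u : ℝ => surv μ S (1 - t / u) / surv μ S (1 - 1 / u)) atTop (nhds (t ^ γ))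

/-- Assumption A of Hashorva and Weng, with explicit bounding variables `Sg` (index `γ`),
`St` (index `τ`) and threshold `ν ∈ (0,1)`. -/
def AssumptionA {Ω : Type*} [MeasurableSpace Ω] (μ : Measure Ω)
    (S Sg St : Ω → ℝ) (γ τ ν : ℝ) : Prop :=
  0 ≤ γ ∧ 0 ≤ τ ∧ ν ∈ Set.Ioo (0:ℝ) 1 ∧
  (∀ᵐ ω ∂μ, 0 ≤ S ω) ∧ HasUpperEndpointOne μ S ∧
  (∀ᵐ ω ∂μ, 0 ≤ Sg ω) ∧ (∀ᵐ ω ∂μ, 0 ≤ St ω) ∧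
  RegVarAtOne μ Sg γ ∧ RegVarAtOne μ St τ ∧
  ∀ u ∈ Set.Ioo ν (1:ℝ),
    μ {ω | u < S ω} ≤ μ {ω | u < St ω} ∧ μ {ω | u < Sg ω} ≤ μ {ω | u < S ω}

/-- `X_n, n ≥ 1` is a standard stationary Gaussian sequence with correlation function
`ρ` (`ρ 0 = 1`, `ρ n = E[X_1 X_{n+1}]`): every finite linear combination of the `X_i`,
`i ≥ 1`, is a centered Gaussian with variance given by the covariances `ρ (|i - j|)`. -/
def IsStdStationaryGaussianSeq {Ω : Type*} [MeasurableSpace Ω] (μ : Measure Ω)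
    (X : ℕ → Ω → ℝ) (ρ : ℕ → ℝ) : Prop :=
  (∀ i, Measurable (X i)) ∧ ρ 0 = 1 ∧
  ∀ (m : ℕ) (c : Fin m → ℝ) (k : ℕ),
    Measure.map (fun ω => ∑ i : Fin m, c i * X (k + 1 + (i : ℕ)) ω) μ
      = gaussianReal 0
          (Real.toNNReal (∑ i : Fin m, ∑ j : Fin m,
            c i * c j * ρ (((i : ℕ) : ℤ) - ((j : ℕ) : ℤ)).natAbs))

/-- `M_n^* = max_{1 ≤ i ≤ n} S_i X_i` (junk value `0` for `n = 0`). -/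
def Mstar {Ω : Type*} (S X : ℕ → Ω → ℝ) : ℕ → Ω → ℝ
  | 0 => fun _ => 0
  | 1 => fun ω => S 1 ω * X 1 ω
  | (n + 2) => fun ω => max (Mstar S X (n + 1) ω) (S (n + 2) ω * X (n + 2) ω)

/-- `H ∈ GMDA(w)`: Gumbel max-domain of attraction with positive scaling function `w`. -/
def GMDA (H : ℝ → ℝ) (w : ℝ → ℝ) : Prop :=
  (∀ u, 0 < w u) ∧
  ∀ x : ℝ, 0 ≤ x →
    Tendsto (fun u : ℝ => (1 - H (u + x / w u)) / (1 - H u)) atTop (nhds (Real.exp (-x)))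

/-!
Conditioning on `S` gives `P(SX > u) = ∫_{(0,1]} (1 - Φ(u/x)) dF(x)` for `u ≥ 0`. Split this
integral at `s`. The piece over `(0, s]` is at most `1 - Φ(u/s) ≤ exp(-u²/(2s²))`, while for
`s < t < 1` the piece over `(s, 1]` is at least `P(S > t) (1 - Φ(u/t))`, which is of order
`exp(-(u/t + 1)²/2)`; here `P(S > t) > 0` because the upper endpoint is `1`. Since `t > s` the
first piece is negligible against the second.
-/

open Set Real Topology

lemma stdNormalCDF_monotone : Monotone stdNormalCDF := fun _ _ hab =>
  measureReal_mono (Iic_subset_Iic.2 hab)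

lemma one_sub_stdNormalCDF_eq (v : ℝ) :
    1 - stdNormalCDF v = (gaussianReal 0 1).real (Ioi v) := by
  rw [← compl_Iic, measureReal_compl measurableSet_Iic, probReal_univ, stdNormalCDF,
    measureReal_def]

lemma one_sub_stdNormalCDF_nonneg (v : ℝ) : 0 ≤ 1 - stdNormalCDF v := by
  rw [one_sub_stdNormalCDF_eq]
  exact measureReal_nonneg

lemma one_sub_stdNormalCDF_le_one (v : ℝ) : 1 - stdNormalCDF v ≤ 1 := by
  rw [one_sub_stdNormalCDF_eq]
  exact measureReal_le_one

/-- Chernoff bound, with the moment generating function `exp (t ^ 2 / 2)` taken at `t = v`. -/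
lemma one_sub_stdNormalCDF_le_exp {v : ℝ} (hv : 0 ≤ v) :
    1 - stdNormalCDF v ≤ exp (-v ^ 2 / 2) := by
  have hChernoff := measure_ge_le_exp_mul_mgf (X := id) (μ := gaussianReal 0 1) v hv
    (integrable_exp_mul_gaussianReal v)
  rw [mgf_id_gaussianReal, ← exp_add] at hChernoff
  calc 1 - stdNormalCDF v = (gaussianReal 0 1).real (Ioi v) := one_sub_stdNormalCDF_eq v
    _ ≤ (gaussianReal 0 1).real {x | v ≤ id x} := measureReal_mono fun _ (hx : v < _) => hx.le
    _ ≤ exp (-v ^ 2 / 2) := hChernoff.trans_eq (by push_cast; ring_nf)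

lemma gaussianPDFReal_zero_one (x : ℝ) :
    gaussianPDFReal 0 1 x = (√(2 * π))⁻¹ * exp (-x ^ 2 / 2) := by
  simp [gaussianPDFReal]

/-- The density on `(v, v + 1]` is at least its value at `v + 1`. -/
lemma exp_le_one_sub_stdNormalCDF {v : ℝ} (hv : 0 ≤ v) :
    (√(2 * π))⁻¹ * exp (-(v + 1) ^ 2 / 2) ≤ 1 - stdNormalCDF v := by
  have hpdf_lower : ∀ x ∈ Ioc v (v + 1),
      (√(2 * π))⁻¹ * exp (-(v + 1) ^ 2 / 2) ≤ gaussianPDFReal 0 1 x := fun x hx => by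
    rw [gaussianPDFReal_zero_one]
    gcongr
    exacts [hv.trans hx.1.le, hx.2]
  calc (√(2 * π))⁻¹ * exp (-(v + 1) ^ 2 / 2)
      = (√(2 * π))⁻¹ * exp (-(v + 1) ^ 2 / 2) * volume.real (Ioc v (v + 1)) := by simp
    _ ≤ ∫ x in Ioc v (v + 1), gaussianPDFReal 0 1 x :=
      setIntegral_ge_of_const_le_real measurableSet_Ioc (by simp) hpdf_lower
        (integrable_gaussianPDFReal 0 1).integrableOn
    _ ≤ ∫ x in Ioi v, gaussianPDFReal 0 1 x :=
      setIntegral_mono_set (integrable_gaussianPDFReal 0 1).integrableOn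
        (.of_forall fun x => gaussianPDFReal_nonneg _ _ _) (.of_forall Ioc_subset_Ioi_self)
    _ = 1 - stdNormalCDF v := by
      rw [one_sub_stdNormalCDF_eq, measureReal_def,
        gaussianReal_apply_eq_integral 0 one_ne_zero, ENNReal.toReal_ofReal
          (setIntegral_nonneg measurableSet_Ioi fun x _ => gaussianPDFReal_nonneg _ _ _)]

lemma tendsto_sq_add_one_sub_sq_atBot {a b : ℝ} (ha : 0 < a) (hab : a < b) :
    Tendsto (fun u : ℝ => (u / b + 1) ^ 2 - (u / a) ^ 2) atTop atBot := by
  have hb : 0 < b := ha.trans hab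
  have hcoef : b⁻¹ - a⁻¹ < 0 := sub_neg.2 (inv_strictAnti₀ ha hab)
  have hfactor : (fun u : ℝ => (u / b + 1) ^ 2 - (u / a) ^ 2)
      = fun u => ((b⁻¹ - a⁻¹) * u + 1) * ((b⁻¹ + a⁻¹) * u + 1) := by
    funext u; ring
  rw [hfactor]
  refine Tendsto.atBot_mul_atTop₀ ?_ ?_
  · exact tendsto_atBot_add_const_right _ _ (tendsto_id.const_mul_atTop_of_neg hcoef)
  · exact tendsto_atTop_add_const_right _ _
      (tendsto_id.const_mul_atTop (by positivity))

lemma tendsto_one_sub_stdNormalCDF_div_div {a b : ℝ} (ha : 0 < a) (hab : a < b) :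
    Tendsto (fun u => (1 - stdNormalCDF (u / a)) / (1 - stdNormalCDF (u / b))) atTop (𝓝 0) := by
  have hb : 0 < b := ha.trans hab
  have hbound : ∀ᶠ u in atTop, (1 - stdNormalCDF (u / a)) / (1 - stdNormalCDF (u / b))
      ≤ √(2 * π) * exp (((u / b + 1) ^ 2 - (u / a) ^ 2) / 2) := by
    filter_upwards [eventually_ge_atTop 0] with u hu
    have hlower := exp_le_one_sub_stdNormalCDF (div_nonneg hu hb.le)
    have hlower_pos : 0 < (√(2 * π))⁻¹ * exp (-(u / b + 1) ^ 2 / 2) := by positivity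
    calc (1 - stdNormalCDF (u / a)) / (1 - stdNormalCDF (u / b))
        ≤ exp (-(u / a) ^ 2 / 2) / ((√(2 * π))⁻¹ * exp (-(u / b + 1) ^ 2 / 2)) :=
          div_le_div₀ (exp_pos _).le (one_sub_stdNormalCDF_le_exp (div_nonneg hu ha.le))
            hlower_pos hlower
      _ = √(2 * π) * exp (((u / b + 1) ^ 2 - (u / a) ^ 2) / 2) := by
          rw [div_eq_mul_inv, mul_inv, inv_inv, ← exp_neg, mul_left_comm, ← exp_add]
          ring_nf
  have hdom : Tendsto (fun u : ℝ => √(2 * π) * exp (((u / b + 1) ^ 2 - (u / a) ^ 2) / 2))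
      atTop (𝓝 0) := by
    simpa using ((tendsto_exp_atBot.comp
      ((tendsto_sq_add_one_sub_sq_atBot ha hab).atBot_div_const two_pos)).const_mul (√(2 * π)))
  refine tendsto_of_tendsto_of_tendsto_of_le_of_le' tendsto_const_nhds hdom ?_ hbound
  exact .of_forall fun u => div_nonneg (one_sub_stdNormalCDF_nonneg _)
    (one_sub_stdNormalCDF_nonneg _)

lemma one_sub_stdNormalCDF_pos {v : ℝ} (hv : 0 ≤ v) : 0 < 1 - stdNormalCDF v :=
  lt_of_lt_of_le (by positivity) (exp_le_one_sub_stdNormalCDF hv)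

lemma measurable_one_sub_stdNormalCDF_div (u : ℝ) :
    Measurable fun x => 1 - stdNormalCDF (u / x) :=
  (stdNormalCDF_monotone.measurable.comp (measurable_const.div measurable_id)).const_sub 1

lemma integrable_one_sub_stdNormalCDF_div (ν : Measure ℝ) [IsFiniteMeasure ν] (u : ℝ) :
    Integrable (fun x => 1 - stdNormalCDF (u / x)) ν :=
  .of_bound (measurable_one_sub_stdNormalCDF_div u).aestronglyMeasurable 1 <|
    .of_forall fun x => by
      rw [Real.norm_eq_abs, abs_of_nonneg (one_sub_stdNormalCDF_nonneg _)]
      exact one_sub_stdNormalCDF_le_one _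

section TruncatedIntegral

variable (ν : Measure ℝ) [IsFiniteMeasure ν] {s t u : ℝ}

lemma setIntegral_Ioc_one_sub_stdNormalCDF_div_le (hu : 0 ≤ u) :
    ∫ x in Ioc 0 s, 1 - stdNormalCDF (u / x) ∂ν
      ≤ ν.real (Ioc 0 s) * (1 - stdNormalCDF (u / s)) := by
  rw [← smul_eq_mul, ← setIntegral_const]
  refine setIntegral_mono_on (integrable_one_sub_stdNormalCDF_div ν u).integrableOn
    (integrableOn_const (measure_ne_top _ _)) measurableSet_Ioc fun x hx => ?_
  gcongr
  exact stdNormalCDF_monotone (div_le_div_of_nonneg_left hu hx.1 hx.2)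

lemma le_setIntegral_Ioi_one_sub_stdNormalCDF_div (hst : s ≤ t) (ht : 0 < t) (hu : 0 ≤ u) :
    ν.real (Ioi t) * (1 - stdNormalCDF (u / t))
      ≤ ∫ x in Ioi s, 1 - stdNormalCDF (u / x) ∂ν := by
  have hint := integrable_one_sub_stdNormalCDF_div ν u
  calc ν.real (Ioi t) * (1 - stdNormalCDF (u / t))
      ≤ ∫ x in Ioi t, 1 - stdNormalCDF (u / x) ∂ν := by
        rw [mul_comm]
        refine setIntegral_ge_of_const_le_real measurableSet_Ioi (measure_ne_top _ _)
          (fun x hx => ?_) hint.integrableOn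
        gcongr
        exact stdNormalCDF_monotone (div_le_div_of_nonneg_left hu ht (le_of_lt hx))
    _ ≤ ∫ x in Ioi s, 1 - stdNormalCDF (u / x) ∂ν :=
        setIntegral_mono_set hint.integrableOn
          (.of_forall fun x => one_sub_stdNormalCDF_nonneg _) (.of_forall (Ioi_subset_Ioi hst))

lemma tendsto_setIntegral_Ioc_zero_div_setIntegral_Ioi (hs : 0 < s) (hst : s < t)
    (ht : 0 < ν (Ioi t)) :
    Tendsto (fun u => (∫ x in Ioc 0 s, 1 - stdNormalCDF (u / x) ∂ν) /
      ∫ x in Ioi s, 1 - stdNormalCDF (u / x) ∂ν) atTop (𝓝 0) := by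
  have ht0 : 0 < t := hs.trans hst
  have hνt : 0 < ν.real (Ioi t) := ENNReal.toReal_pos ht.ne' (measure_ne_top _ _)
  have hbound : ∀ᶠ u in atTop, (∫ x in Ioc 0 s, 1 - stdNormalCDF (u / x) ∂ν) /
      (∫ x in Ioi s, 1 - stdNormalCDF (u / x) ∂ν) ≤ ν.real (Ioc 0 s) / ν.real (Ioi t) *
        ((1 - stdNormalCDF (u / s)) / (1 - stdNormalCDF (u / t))) := by
    filter_upwards [eventually_ge_atTop 0] with u hu
    rw [div_mul_div_comm]
    exact div_le_div₀ (mul_nonneg measureReal_nonneg (one_sub_stdNormalCDF_nonneg _))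
      (setIntegral_Ioc_one_sub_stdNormalCDF_div_le ν hu)
      (mul_pos hνt (one_sub_stdNormalCDF_pos (div_nonneg hu ht0.le)))
      (le_setIntegral_Ioi_one_sub_stdNormalCDF_div ν hst.le ht0 hu)
  refine tendsto_of_tendsto_of_tendsto_of_le_of_le' tendsto_const_nhds ?_ ?_ hbound
  · simpa using (tendsto_one_sub_stdNormalCDF_div_div hs hst).const_mul _
  · exact .of_forall fun u => div_nonneg
      (setIntegral_nonneg measurableSet_Ioc fun x _ => one_sub_stdNormalCDF_nonneg _)
      (setIntegral_nonneg measurableSet_Ioi fun x _ => one_sub_stdNormalCDF_nonneg _)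

lemma tendsto_setIntegral_Ioi_zero_div_setIntegral_Ioi (hs : 0 < s) (hst : s < t)
    (ht : 0 < ν (Ioi t)) :
    Tendsto (fun u => (∫ x in Ioi 0, 1 - stdNormalCDF (u / x) ∂ν) /
      ∫ x in Ioi s, 1 - stdNormalCDF (u / x) ∂ν) atTop (𝓝 1) := by
  have hint := integrable_one_sub_stdNormalCDF_div ν
  have hlim := (tendsto_setIntegral_Ioc_zero_div_setIntegral_Ioi ν hs hst ht).add_const 1
  rw [zero_add] at hlim
  refine hlim.congr' ?_
  filter_upwards [eventually_ge_atTop 0] with u hu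
  have hpos : 0 < ∫ x in Ioi s, 1 - stdNormalCDF (u / x) ∂ν :=
    (mul_pos (ENNReal.toReal_pos ht.ne' (measure_ne_top _ _))
      (one_sub_stdNormalCDF_pos (div_nonneg hu (hs.trans hst).le))).trans_le
      (le_setIntegral_Ioi_one_sub_stdNormalCDF_div ν hst.le (hs.trans hst) hu)
  rw [← Ioc_union_Ioi_eq_Ioi hs.le, setIntegral_union Ioc_disjoint_Ioi_same measurableSet_Ioi
    (hint u).integrableOn (hint u).integrableOn, add_div, div_self hpos.ne']

end TruncatedIntegral

lemma gaussianReal_setOf_lt_mul {u x : ℝ} (hu : 0 ≤ u) (hx : 0 ≤ x) :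
    gaussianReal 0 1 {y | u < x * y}
      = (Ioi 0).indicator (fun x => ENNReal.ofReal (1 - stdNormalCDF (u / x))) x := by
  rcases hx.eq_or_lt with rfl | hx
  · simp [hu.not_gt]
  · have hslice : {y | u < x * y} = Ioi (u / x) := by
      ext y
      simp [div_lt_iff₀' hx]
    rw [indicator_of_mem (mem_Ioi.2 hx), hslice, one_sub_stdNormalCDF_eq, ofReal_measureReal]

lemma measureReal_lt_mul_eq_setIntegral {Ω : Type*} [MeasurableSpace Ω] {μ : Measure Ω}
    [IsFiniteMeasure μ] {S X : Ω → ℝ} (hS : Measurable S) (hX : Measurable X)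
    (hXgauss : μ.map X = gaussianReal 0 1) (hindep : IndepFun S X μ)
    (hSnonneg : ∀ᵐ ω ∂μ, 0 ≤ S ω) {u : ℝ} (hu : 0 ≤ u) :
    μ.real {ω | u < S ω * X ω} = ∫ x in Ioi 0, 1 - stdNormalCDF (u / x) ∂(μ.map S) := by
  have hE : MeasurableSet {p : ℝ × ℝ | u < p.1 * p.2} :=
    measurableSet_lt measurable_const (measurable_fst.mul measurable_snd)
  have hjoint : μ.map (fun ω => (S ω, X ω)) = (μ.map S).prod (gaussianReal 0 1) := by
    rw [← hXgauss]
    exact (indepFun_iff_map_prod_eq_prod_map_map hS.aemeasurable hX.aemeasurable).mp hindep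
  have hmap_nonneg : ∀ᵐ x ∂(μ.map S), 0 ≤ x :=
    (ae_map_iff hS.aemeasurable measurableSet_Ici).mpr hSnonneg
  calc μ.real {ω | u < S ω * X ω}
      = ((μ.map S).prod (gaussianReal 0 1)).real {p | u < p.1 * p.2} := by
        rw [← hjoint, map_measureReal_apply (hS.prodMk hX) hE]
        rfl
    _ = (∫⁻ x in Ioi 0, ENNReal.ofReal (1 - stdNormalCDF (u / x)) ∂(μ.map S)).toReal := by
        rw [measureReal_def, Measure.prod_apply hE, ← lintegral_indicator measurableSet_Ioi]
        congr 1
        exact lintegral_congr_ae (hmap_nonneg.mono fun x hx => gaussianReal_setOf_lt_mul hu hx)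
    _ = ∫ x in Ioi 0, 1 - stdNormalCDF (u / x) ∂(μ.map S) :=
        (integral_eq_lintegral_of_nonneg_ae (.of_forall fun _ => one_sub_stdNormalCDF_nonneg _)
          (measurable_one_sub_stdNormalCDF_div u).aestronglyMeasurable).symm

theorem tail_equiv_truncated_integral_general
    {Ω : Type*} [MeasurableSpace Ω] (μ : Measure Ω) [IsProbabilityMeasure μ]
    (X S : Ω → ℝ)
    (hXmeas : Measurable X) (hSmeas : Measurable S)
    (hXgauss : Measure.map X μ = gaussianReal 0 1)
    (hSXindep : IndepFun S X μ)
    (hSnonneg : ∀ᵐ ω ∂μ, 0 ≤ S ω)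
    (hupper : HasUpperEndpointOne μ S) :
    ∀ s ∈ Set.Ioo (0 : ℝ) 1,
      Tendsto (fun u : ℝ =>
          (μ {ω | u < S ω * X ω}).toReal /
            ∫ x in Set.Ioc s 1, (1 - stdNormalCDF (u / x)) ∂(Measure.map S μ))
        atTop (nhds 1) := by
  rintro s ⟨hs0, hs1⟩
  have hmass : 0 < μ.map S (Ioi ((s + 1) / 2)) := by
    rw [Measure.map_apply hSmeas measurableSet_Ioi]
    exact hupper.2 _ (by linarith)
  have hIoi_ae_eq : Ioi s =ᵐ[μ.map S] Ioc s 1 := by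
    have hle : ∀ᵐ x ∂(μ.map S), x ≤ 1 :=
      (ae_map_iff hSmeas.aemeasurable measurableSet_Iic).2 hupper.1
    exact eventuallyEq_set.2 (hle.mono fun x hx => ⟨fun h => ⟨h, hx⟩, fun h => h.1⟩)
  refine (tendsto_setIntegral_Ioi_zero_div_setIntegral_Ioi (μ.map S) hs0
    (by linarith : s < (s + 1) / 2) hmass).congr' ?_
  filter_upwards [eventually_ge_atTop 0] with u hu
  rw [← measureReal_def,
    measureReal_lt_mul_eq_setIntegral hSmeas hXmeas hXgauss hSXindep hSnonneg hu,
    setIntegral_congr_set hIoi_ae_eq]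

/-- asymptotic equivalence of the tail of `SX` with the truncated
Stieltjes integral `∫_s^1 (1 - Φ(u/x)) dF(x)`. -/
theorem tail_equiv_truncated_integral
    {Ω : Type*} [MeasurableSpace Ω] (μ : Measure Ω) [IsProbabilityMeasure μ]
    (X S : Ω → ℝ)
    (hXmeas : Measurable X) (hSmeas : Measurable S)
    (hXgauss : Measure.map X μ = gaussianReal 0 1)
    (hSXindep : IndepFun S X μ)
    (hSnonneg : ∀ᵐ ω ∂μ, 0 ≤ S ω)
    (hupper : HasUpperEndpointOne μ S)
    (hSne0 : ¬ (∀ᵐ ω ∂μ, S ω = 0)) :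
    ∀ s ∈ Set.Ioo (0 : ℝ) 1,
      Tendsto (fun u : ℝ =>
          (μ {ω | u < S ω * X ω}).toReal /
            ∫ x in Set.Ioc s 1, (1 - stdNormalCDF (u / x)) ∂(Measure.map S μ))
        atTop (nhds 1) :=
  tail_equiv_truncated_integral_general μ X S hXmeas hSmeas hXgauss hSXindep hSnonneg hupper
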